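/- arXiv:2311.11333 — 3 statements merged into one kernel-verified Lean document; each statement's English description precedes it below -/
import Mathlib

section
/- Let n ≥ 1 and let κ ∈ ℝ^n satisfy σ_i(κ) > 0 for all 1 ≤ i ≤ l, where 1 ≤ l ≤ n. Then for any integers k, l with 1 ≤ k < l ≤ n, the normalized elementary symmetric functions satisfy the Newton–MacLaurin inequality H_{k-1}(κ)·H_l(κ) ≤ H_k(κ)·H_{l-1}(κ). -/
open Finset

/-- The `r`-th elementary symmetric polynomial of `κ = (κ_1, …, κ_n)`. -/
noncomputable def esymm (n : ℕ) (κ : Fin n → ℝ) (r : ℕ) : ℝ :=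
  ∑ s ∈ powersetCard r (univ : Finset (Fin n)), ∏ i ∈ s, κ i

/-- The normalized `r`-th mean curvature `H_r(κ) = σ_r(κ) / C(n,r)`. -/
noncomputable def Hmc (n : ℕ) (κ : Fin n → ℝ) (r : ℕ) : ℝ :=
  esymm n κ r / (n.choose r)

/-!
For a multiset of `N` reals write `E_j = σ_j / C(N, j)`. Newton's inequality
`E_r E_{r+2} ≤ E_{r+1}²` is proved by the classical reduction. By Rolle's theorem the derivative
of `∏ (X - a)` again has only real roots, and these have the same means `E_0, …, E_{N-1}`; so one
may assume `N = r + 2`. If no entry is zero, inverting all entries exchanges `E_j` and `E_{N-j}`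
up to the common factor `∏ a`, which turns the inequality into `E_0 E_2 ≤ E_1²`, and reducing
once more to two numbers `a, b` this is `ab ≤ ((a + b) / 2)²`. Newton's inequalities say that
`E_{j+1} / E_j` is nonincreasing as long as the `E_j` are positive, which gives the
Newton–MacLaurin inequality.
-/

open Polynomial

theorem Finset.esymm_map_val_univ_eq_prod_mul_esymm_inv {ι K : Type*} [Fintype ι] [Field K]
    (f : ι → K) (hf : ∀ i, f i ≠ 0) {j : ℕ} (hj : j ≤ Fintype.card ι) :
    (univ.val.map f).esymm j
      = (∏ i, f i) * (univ.val.map fun i => (f i)⁻¹).esymm (Fintype.card ι - j) := by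
  classical
  rw [esymm_map_val, esymm_map_val, mul_sum]
  refine sum_nbij' (univ \ ·) (univ \ ·) ?_ ?_ (by simp) (by simp) fun t _ => ?_
  · intro t ht
    rw [mem_powersetCard_univ] at ht ⊢
    rw [card_univ_sdiff, ht]
  · intro t ht
    rw [mem_powersetCard_univ] at ht ⊢
    rw [card_univ_sdiff, ht]
    omega
  · rw [prod_inv_distrib, ← prod_sdiff (subset_univ t), mul_right_comm,
      mul_inv_cancel₀ (prod_ne_zero_iff.2 fun i _ => hf i), one_mul]

namespace Multiset

section CommSemiring

variable {R : Type*} [CommSemiring R]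

theorem esymm_zero (s : Multiset R) : s.esymm 0 = 1 := by
  simp [esymm]

theorem esymm_card (s : Multiset R) : s.esymm (card s) = s.prod := by
  simp [esymm, powersetCard_self]

theorem esymm_eq_zero_of_card_lt {s : Multiset R} {j : ℕ} (h : card s < j) : s.esymm j = 0 := by
  simp [esymm, powersetCard_eq_empty j h]

end CommSemiring

section Field

variable {K : Type*} [Field K]

noncomputable def esymmMean (s : Multiset K) (j : ℕ) : K :=
  s.esymm j / (card s).choose j

theorem esymmMean_zero (s : Multiset K) : s.esymmMean 0 = 1 := by
  simp [esymmMean, esymm_zero]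

theorem esymmMean_eq_zero_of_card_lt {s : Multiset K} {j : ℕ} (h : card s < j) :
    s.esymmMean j = 0 := by
  simp [esymmMean, esymm_eq_zero_of_card_lt h]

theorem esymm_eq_prod_mul_esymm_map_inv {s : Multiset K} (hs : (0 : K) ∉ s) {j : ℕ}
    (hj : j ≤ card s) :
    s.esymm j = s.prod * (s.map (·⁻¹)).esymm (card s - j) := by
  classical
  have := Finset.esymm_map_val_univ_eq_prod_mul_esymm_inv (fun x : s => (x : K))
    (fun x hx => hs (hx ▸ coe_mem)) (j := j) (by rwa [card_coe])
  simpa [map_univ_comp_coe, Finset.prod_eq_multiset_prod] using this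

theorem esymmMean_eq_prod_mul_esymmMean_map_inv {s : Multiset K} (hs : (0 : K) ∉ s) {j : ℕ}
    (hj : j ≤ card s) :
    s.esymmMean j = s.prod * (s.map (·⁻¹)).esymmMean (card s - j) := by
  rw [esymmMean, esymmMean, esymm_eq_prod_mul_esymm_map_inv hs hj, card_map,
    Nat.choose_symm hj, mul_div_assoc]

end Field

theorem esymmMean_pos {s : Multiset ℝ} {j : ℕ} (h : 0 < s.esymm j) : 0 < s.esymmMean j := by
  have hj : j ≤ card s := by
    by_contra! hlt
    exact h.ne' (esymm_eq_zero_of_card_lt hlt)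
  exact div_pos h (Nat.cast_pos.2 (Nat.choose_pos hj))

theorem exists_derivative_prod_X_sub_C_eq (s : Multiset ℝ) {n : ℕ}
    (hs : card s = n + 1) :
    ∃ t : Multiset ℝ, card t = n ∧
      derivative (s.map (X - C ·)).prod = C ((n : ℝ) + 1) * (t.map (X - C ·)).prod := by
  set p := (s.map (X - C ·)).prod
  have hp_deg : p.natDegree = n + 1 := by rw [natDegree_multiset_prod_X_sub_C_eq_card, hs]
  have hp_coeff : p.coeff (n + 1) = 1 := by
    rw [← hp_deg]; exact (monic_multiset_prod_of_monic _ _ fun a _ => monic_X_sub_C a).leadingCoeff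
  have hq_coeff : (derivative p).coeff n = (n : ℝ) + 1 := by
    rw [coeff_derivative, hp_coeff, one_mul]
  have hq_deg : (derivative p).natDegree = n := by
    refine le_antisymm ?_ (le_natDegree_of_ne_zero (by rw [hq_coeff]; positivity))
    simpa only [hp_deg, Nat.add_sub_cancel] using natDegree_derivative_le p
  -- Rolle: between consecutive roots of `p` (with multiplicity) lies a root of `p'`
  have hq_roots : card (derivative p).roots = n := by
    have h₁ := card_roots_le_derivative p
    have h₂ := card_roots' (derivative p)
    rw [roots_multiset_prod_X_sub_C, hs] at h₁
    omega
  refine ⟨(derivative p).roots, hq_roots, ?_⟩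
  have hsplit : Splits (derivative p) := splits_iff_card_roots.2 (by rw [hq_roots, hq_deg])
  rw [← hq_coeff, ← hq_deg]
  exact hsplit.eq_prod_roots

theorem add_one_mul_esymm_eq_of_derivative_eq (s t : Multiset ℝ) {n : ℕ} (hs : card s = n + 1)
    (ht : card t = n)
    (hst : derivative (s.map (X - C ·)).prod = C ((n : ℝ) + 1) * (t.map (X - C ·)).prod)
    {j : ℕ} (hj : j ≤ n) :
    ((n : ℝ) + 1) * t.esymm j = ((n + 1 - j : ℕ) : ℝ) * s.esymm j := by
  have := congrArg (coeff · (n - j)) hst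
  simp only [coeff_derivative, coeff_C_mul] at this
  rw [prod_X_sub_C_coeff s (by omega), prod_X_sub_C_coeff t (by omega), hs, ht,
    show n + 1 - (n - j + 1) = j by omega, show n - (n - j) = j by omega] at this
  have hcast : ((n - j : ℕ) : ℝ) + 1 = ((n + 1 - j : ℕ) : ℝ) := by
    rw [show n + 1 - j = n - j + 1 by omega]; push_cast; ring
  rw [hcast] at this
  refine mul_left_cancel₀ (pow_ne_zero j (neg_ne_zero.2 one_ne_zero)) ?_
  linear_combination this.symm

theorem exists_card_eq_esymmMean_eq_of_card_eq_succ {s : Multiset ℝ} {n : ℕ}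
    (hs : card s = n + 1) :
    ∃ t : Multiset ℝ, card t = n ∧ ∀ j ≤ n, t.esymmMean j = s.esymmMean j := by
  obtain ⟨t, ht, hst⟩ := s.exists_derivative_prod_X_sub_C_eq hs
  refine ⟨t, ht, fun j hj => ?_⟩
  have hesymm := add_one_mul_esymm_eq_of_derivative_eq s t hs ht hst hj
  have hchoose : ((n.choose j : ℕ) : ℝ) * ((n : ℝ) + 1)
      = (((n + 1).choose j : ℕ) : ℝ) * ((n + 1 - j : ℕ) : ℝ) := by
    exact_mod_cast Nat.choose_mul_succ_eq n j
  have h₁ : (0 : ℝ) < n.choose j := Nat.cast_pos.2 (Nat.choose_pos hj)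
  have h₂ : (0 : ℝ) < (n + 1).choose j := Nat.cast_pos.2 (Nat.choose_pos (by omega))
  rw [esymmMean, esymmMean, ht, hs, div_eq_div_iff h₁.ne' h₂.ne']
  refine mul_left_cancel₀ (n.cast_add_one_ne_zero (R := ℝ)) ?_
  linear_combination (((n + 1).choose j : ℕ) : ℝ) * hesymm - s.esymm j * hchoose

theorem exists_card_eq_esymmMean_eq (s : Multiset ℝ) {m : ℕ} (hm : m ≤ card s) :
    ∃ t : Multiset ℝ, card t = m ∧ ∀ j ≤ m, t.esymmMean j = s.esymmMean j := by
  induction hm using Nat.decreasingInduction with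
  | self => exact ⟨s, rfl, fun _ _ => rfl⟩
  | of_succ m _ ih =>
    obtain ⟨t, ht, htj⟩ := ih
    obtain ⟨u, hu, huj⟩ := exists_card_eq_esymmMean_eq_of_card_eq_succ ht
    exact ⟨u, hu, fun j hj => (huj j hj).trans (htj j (by omega))⟩

theorem esymmMean_zero_mul_esymmMean_two_le_sq (s : Multiset ℝ) :
    s.esymmMean 0 * s.esymmMean 2 ≤ s.esymmMean 1 ^ 2 := by
  rcases lt_or_ge (card s) 2 with hs | hs
  · rw [esymmMean_eq_zero_of_card_lt hs, mul_zero]; positivity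
  obtain ⟨t, ht, htj⟩ := s.exists_card_eq_esymmMean_eq hs
  obtain ⟨a, b, rfl⟩ := card_eq_two.1 ht
  rw [← htj 0 (by omega), ← htj 1 (by omega), ← htj 2 (by omega)]
  simp only [esymmMean, esymm_zero, insert_eq_cons, esymm_pair_one, esymm_pair_two]
  norm_num
  nlinarith [sq_nonneg (a - b)]

theorem esymmMean_mul_esymmMean_le_sq_of_card_eq {s : Multiset ℝ} {r : ℕ}
    (hs : card s = r + 2) :
    s.esymmMean r * s.esymmMean (r + 2) ≤ s.esymmMean (r + 1) ^ 2 := by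
  by_cases h0 : (0 : ℝ) ∈ s
  · have : s.esymmMean (r + 2) = 0 := by
      rw [esymmMean, ← hs, esymm_card, prod_eq_zero h0, zero_div]
    rw [this, mul_zero]
    positivity
  · set u := s.map (·⁻¹)
    have hmean (i) (hi : i ≤ 2) : s.esymmMean (r + 2 - i) = s.prod * u.esymmMean i := by
      rw [esymmMean_eq_prod_mul_esymmMean_map_inv h0 (by omega), hs]
      congr 2; omega
    have h₀ : s.esymmMean (r + 2) = s.prod * u.esymmMean 0 := hmean 0 zero_le_two
    have h₁ : s.esymmMean (r + 1) = s.prod * u.esymmMean 1 := hmean 1 one_le_two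
    have h₂ : s.esymmMean r = s.prod * u.esymmMean 2 := hmean 2 le_rfl
    rw [h₀, h₁, h₂]
    calc s.prod * u.esymmMean 2 * (s.prod * u.esymmMean 0)
        = s.prod ^ 2 * (u.esymmMean 0 * u.esymmMean 2) := by ring
      _ ≤ s.prod ^ 2 * u.esymmMean 1 ^ 2 := by
        gcongr; exact u.esymmMean_zero_mul_esymmMean_two_le_sq
      _ = (s.prod * u.esymmMean 1) ^ 2 := by ring

theorem esymmMean_mul_esymmMean_le_sq (s : Multiset ℝ) (r : ℕ) :
    s.esymmMean r * s.esymmMean (r + 2) ≤ s.esymmMean (r + 1) ^ 2 := by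
  rcases lt_or_ge (card s) (r + 2) with hs | hs
  · rw [esymmMean_eq_zero_of_card_lt hs, mul_zero]; positivity
  obtain ⟨t, ht, htj⟩ := s.exists_card_eq_esymmMean_eq hs
  rw [← htj r (by omega), ← htj (r + 1) (by omega), ← htj (r + 2) le_rfl]
  exact esymmMean_mul_esymmMean_le_sq_of_card_eq ht

end Multiset

theorem mul_le_mul_of_forall_mul_le_sq {a : ℕ → ℝ} (ha : ∀ i, a i * a (i + 2) ≤ a (i + 1) ^ 2)
    {j m : ℕ} (hjm : j ≤ m) (hpos : ∀ i ≤ m + 1, 0 < a i) :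
    a j * a (m + 1) ≤ a (j + 1) * a m := by
  induction m, hjm using Nat.le_induction with
  | base => rw [mul_comm]
  | succ m hjm ih =>
    have ih := ih fun i hi => hpos i (by omega)
    refine le_of_mul_le_mul_left ?_ (hpos (m + 1) (by omega))
    calc a (m + 1) * (a j * a (m + 2)) = a (m + 2) * (a j * a (m + 1)) := by ring
      _ ≤ a (m + 2) * (a (j + 1) * a m) := mul_le_mul_of_nonneg_left ih (hpos _ le_rfl).le
      _ = a (j + 1) * (a m * a (m + 2)) := by ring
      _ ≤ a (j + 1) * a (m + 1) ^ 2 := mul_le_mul_of_nonneg_left (ha m) (hpos _ (by omega)).le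
      _ = a (m + 1) * (a (j + 1) * a (m + 1)) := by ring

theorem esymm_eq_esymm_map_univ (n : ℕ) (κ : Fin n → ℝ) (r : ℕ) :
    esymm n κ r = (univ.val.map κ).esymm r :=
  (esymm_map_val κ univ r).symm

theorem Hmc_eq_esymmMean (n : ℕ) (κ : Fin n → ℝ) (r : ℕ) :
    Hmc n κ r = (univ.val.map κ).esymmMean r := by
  rw [Hmc, Multiset.esymmMean, esymm_eq_esymm_map_univ, Multiset.card_map, card_val, card_univ,
    Fintype.card_fin]

theorem newton_maclaurin_general (n l k : ℕ) (hk : 1 ≤ k) (hkl : k < l)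
    (κ : Fin n → ℝ) (hκ : ∀ i, 1 ≤ i → i ≤ l → 0 < esymm n κ i) :
    Hmc n κ (k - 1) * Hmc n κ l ≤ Hmc n κ k * Hmc n κ (l - 1) := by
  obtain ⟨j, rfl⟩ : ∃ j, k = j + 1 := ⟨k - 1, by omega⟩
  obtain ⟨m, rfl⟩ : ∃ m, l = m + 1 := ⟨l - 1, by omega⟩
  simp only [Nat.add_sub_cancel, Hmc_eq_esymmMean]
  refine mul_le_mul_of_forall_mul_le_sq (Multiset.esymmMean_mul_esymmMean_le_sq _) (by omega)
    fun i hi => ?_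
  rcases Nat.eq_zero_or_pos i with rfl | hi₀
  · rw [Multiset.esymmMean_zero]; exact one_pos
  · exact Multiset.esymmMean_pos (esymm_eq_esymm_map_univ n κ i ▸ hκ i hi₀ hi)

/-- Newton–MacLaurin inequality: if `κ ∈ Γ_l⁺` (i.e. `σ_i(κ) > 0` for `1 ≤ i ≤ l`),
then for `1 ≤ k < l ≤ n` one has `H_{k-1}·H_l ≤ H_k·H_{l-1}`. -/
theorem newton_maclaurin (n l k : ℕ) (hn : 1 ≤ n) (hl : l ≤ n)
    (hk : 1 ≤ k) (hkl : k < l)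
    (κ : Fin n → ℝ) (hκ : ∀ i, 1 ≤ i → i ≤ l → 0 < esymm n κ i) :
    Hmc n κ (k - 1) * Hmc n κ l ≤ Hmc n κ k * Hmc n κ (l - 1) :=
  newton_maclaurin_general n l k hk hkl κ hκ
end

section
/- Let n ≥ 1, let 0 ≤ r ≤ n−1, and let κ ∈ ℝ^n satisfy σ_i(κ) > 0 for all 1 ≤ i ≤ r+1 (i.e., κ ∈ Γ_{r+1}⁺). Then for every index i ∈ {1,…,n} and every 0 ≤ j ≤ r, one has σ_j(κ|κ_i) > 0. (This expresses, in terms of principal values, that the Newton tensors P_0,…,P_r are positive definite on the Gårding cone Γ_{r+1}⁺, which underlies the ellipticity of the operators L_j = div(P_j ∇·) for 0 ≤ j ≤ r.) -/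
open Finset Polynomial

/-- `σ_r(κ|κ_i)`: the `r`-th elementary symmetric polynomial of the `(n-1)`-tuple obtained
from `κ` by deleting the entry `κ_i`. -/
noncomputable def esymmDel (n : ℕ) (κ : Fin n → ℝ) (i : Fin n) (r : ℕ) : ℝ :=
  ∑ s ∈ powersetCard r ((univ : Finset (Fin n)).erase i), ∏ j ∈ s, κ j

lemma esymm_zero_eq (n : ℕ) (κ : Fin n → ℝ) : esymm n κ 0 = 1 := by
  simp [esymm]

lemma esymmDel_zero_eq (n : ℕ) (κ : Fin n → ℝ) (i : Fin n) : esymmDel n κ i 0 = 1 := by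
  simp [esymmDel]

lemma eval_pos_of_coeff_nonneg (p : ℝ[X]) (h0 : 0 < p.coeff 0)
    (h : ∀ m, 0 ≤ p.coeff m) {s : ℝ} (hs : 0 ≤ s) : 0 < p.eval s := by
  rw [Polynomial.eval_eq_sum_range]
  have h1 : (0:ℝ) < p.coeff 0 * s ^ 0 := by simpa using h0
  have h2 : p.coeff 0 * s ^ 0 ≤ ∑ m ∈ Finset.range (p.natDegree + 1), p.coeff m * s ^ m :=
    Finset.single_le_sum (f := fun m => p.coeff m * s ^ m)
      (fun m _ => mul_nonneg (h m) (pow_nonneg hs m))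
      (Finset.mem_range.2 (Nat.succ_pos _))
  linarith

lemma multiset_prod_pos {s : Multiset ℝ} (h : ∀ x ∈ s, 0 < x) : 0 < s.prod := by
  induction s using Multiset.induction_on with
  | empty => simp
  | cons a s ih =>
    rw [Multiset.prod_cons]
    exact mul_pos (h a (Multiset.mem_cons_self a s))
      (ih fun x hx => h x (Multiset.mem_cons_of_mem hx))

lemma multiset_sum_pos {s : Multiset ℝ} (h : ∀ x ∈ s, 0 < x) (hs : s ≠ 0) : 0 < s.sum := by
  induction s using Multiset.induction_on with
  | empty => exact absurd rfl hs
  | cons a s ih =>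
    rw [Multiset.sum_cons]
    rcases eq_or_ne s 0 with rfl | hs'
    · simpa using h a (Multiset.mem_cons_self a 0)
    · have := ih (fun x hx => h x (Multiset.mem_cons_of_mem hx)) hs'
      have := h a (Multiset.mem_cons_self a s)
      linarith

lemma multiset_esymm_pos {s : Multiset ℝ} (h : ∀ x ∈ s, 0 < x) {m : ℕ}
    (hm : m ≤ Multiset.card s) : 0 < s.esymm m := by
  refine multiset_sum_pos ?_ ?_
  · intro x hx
    unfold Multiset.esymm at hx
    rw [Multiset.mem_map] at hx
    obtain ⟨t, ht, rfl⟩ := hx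
    rw [Multiset.mem_powersetCard] at ht
    exact multiset_prod_pos fun y hy => h y (Multiset.mem_of_le ht.1 hy)
  · simp only [ne_eq, Multiset.map_eq_zero, ← Multiset.card_eq_zero, Multiset.card_map,
      Multiset.card_powersetCard]
    exact (Nat.choose_pos hm).ne'

lemma iterate_derivative_linear_mul (a : ℝ) (p : ℝ[X]) (m : ℕ) :
    derivative^[m+1] ((X + C a) * p)
      = (X + C a) * derivative^[m+1] p + C ((m:ℝ)+1) * derivative^[m] p := by
  induction m generalizing p with
  | zero =>
    simp [derivative_mul]
    ring
  | succ m ih =>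
    rw [Function.iterate_succ_apply, derivative_mul]
    have h1 : derivative (X + C a) = 1 := by simp
    have hadd : derivative^[m+1] (p + (X + C a) * derivative p)
        = derivative^[m+1] p + derivative^[m+1] ((X + C a) * derivative p) := by
      simp [iterate_map_add]
    rw [h1, one_mul, hadd, ih (derivative p),
      ← Function.iterate_succ_apply, ← Function.iterate_succ_apply]
    have hC : (C ((↑(m+1):ℝ)+1) : ℝ[X]) = C ((m:ℝ)+1) + 1 := by
      push_cast; rw [C_add, C_1]
    rw [hC]
    ring

lemma iterate_natDegree (p : ℝ[X]) (hp : p ≠ 0) {m : ℕ} (hm : m ≤ p.natDegree) :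
    (derivative^[m] p).natDegree = p.natDegree - m := by
  refine le_antisymm (natDegree_iterate_derivative p m) (le_natDegree_of_ne_zero ?_)
  rw [coeff_iterate_derivative, Nat.sub_add_cancel hm]
  have h1 : p.coeff p.natDegree ≠ 0 := by
    rw [coeff_natDegree]; exact leadingCoeff_ne_zero.2 hp
  have h2 : 0 < Nat.descFactorial p.natDegree m := by
    rcases Nat.eq_zero_or_pos (Nat.descFactorial p.natDegree m) with h | h
    · exact absurd (Nat.descFactorial_eq_zero_iff_lt.1 h) (not_lt.2 hm)
    · exact h
  simp only [smul_eq_mul, nsmul_eq_mul, ne_eq, mul_eq_zero, not_or]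
  exact ⟨Nat.cast_ne_zero.2 h2.ne', h1⟩

lemma iterate_roots_card (p : ℝ[X]) (hp0 : p ≠ 0)
    (hp : Multiset.card p.roots = p.natDegree) {m : ℕ} (hm : m ≤ p.natDegree) :
    Multiset.card (derivative^[m] p).roots = p.natDegree - m := by
  induction m with
  | zero => simpa using hp
  | succ m ih =>
    have hmle : m ≤ p.natDegree := Nat.le_of_succ_le hm
    have hup : Multiset.card (derivative^[m+1] p).roots ≤ p.natDegree - (m+1) := by
      have := Polynomial.card_roots' (derivative^[m+1] p)
      rwa [iterate_natDegree p hp0 hm] at this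
    have hlow := Polynomial.card_roots_le_derivative (derivative^[m] p)
    rw [show derivative ((derivative (R:=ℝ))^[m] p) = derivative^[m+1] p from (Function.iterate_succ_apply' _ m p).symm] at hlow
    rw [ih hmle] at hlow
    omega

lemma prodLin_monic {n : ℕ} (κ : Fin n → ℝ) (s : Finset (Fin n)) :
    (∏ l ∈ s, (X + C (κ l))).Monic :=
  monic_prod_of_monic _ _ fun _ _ => monic_X_add_C _

lemma prodLin_natDegree {n : ℕ} (κ : Fin n → ℝ) (s : Finset (Fin n)) :
    (∏ l ∈ s, (X + C (κ l))).natDegree = s.card := by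
  rw [natDegree_prod_of_monic _ _ fun _ _ => monic_X_add_C _]
  simp [natDegree_X_add_C]

lemma prodLin_roots_card {n : ℕ} (κ : Fin n → ℝ) (s : Finset (Fin n)) :
    Multiset.card (∏ l ∈ s, (X + C (κ l))).roots = s.card := by
  rw [Polynomial.roots_prod _ _ (prodLin_monic κ s).ne_zero]
  have : ∀ l : Fin n, (X + C (κ l)).roots = {-(κ l)} := by
    intro l
    have : (X + C (κ l)) = (X - C (-(κ l))) := by rw [map_neg, sub_neg_eq_add]
    rw [this, roots_X_sub_C]
  rw [Multiset.card_bind]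
  simp [this]

lemma descFactorial_cast_pos {a b : ℕ} (h : b ≤ a) : (0:ℝ) < (a.descFactorial b : ℝ) := by
  have : a.descFactorial b ≠ 0 := by
    intro h0
    exact absurd (Nat.descFactorial_eq_zero_iff_lt.1 h0) (not_lt.2 h)
  exact_mod_cast Nat.pos_of_ne_zero this

set_option maxHeartbeats 1000000 in
lemma key (j d : ℕ) (hj : 1 ≤ j) (κ : Fin (j+d+2) → ℝ) (i : Fin (j+d+2))
    (hfull : ∀ m, m ≤ j + 1 → 0 < esymm (j+d+2) κ m)
    (hdel : ∀ m, m < j → 0 < esymmDel (j+d+2) κ i m) :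
    0 < esymmDel (j+d+2) κ i j := by
  by_contra hX
  push_neg at hX
  set E := (univ : Finset (Fin (j+d+2))).erase i with hEdef
  have hEcard : E.card = j + d + 1 := by
    rw [hEdef, card_erase_of_mem (mem_univ i), card_univ, Fintype.card_fin]
    omega
  set P : ℝ[X] := ∏ l ∈ E, (X + C (κ l)) with hPdef
  have hPmon : P.Monic := prodLin_monic κ E
  have hPnd : P.natDegree = j + d + 1 := by rw [hPdef, prodLin_natDegree, hEcard]
  have hProots : Multiset.card P.roots = j + d + 1 := by
    rw [hPdef, prodLin_roots_card, hEcard]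
  have hPcoeff : ∀ m, m ≤ j + d + 1 → P.coeff m = esymmDel (j+d+2) κ i (j + d + 1 - m) := by
    intro m hm
    rw [hPdef, Finset.prod_X_add_C_coeff E κ (by rw [hEcard]; exact hm), hEcard]
    rfl
  have hPcoeff0 : ∀ m, j + d + 1 < m → P.coeff m = 0 := fun m hm =>
    coeff_eq_zero_of_natDegree_lt (by rw [hPnd]; exact hm)
  -- the full product
  set Pf : ℝ[X] := ∏ l ∈ (univ : Finset (Fin (j+d+2))), (X + C (κ l)) with hPfdef
  have hPfP : Pf = (X + C (κ i)) * P := by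
    rw [hPfdef, hPdef, hEdef]
    exact (Finset.mul_prod_erase univ _ (mem_univ i)).symm
  have hPfnd : Pf.natDegree = j+d+2 := by
    rw [hPfdef, prodLin_natDegree, card_univ, Fintype.card_fin]
  have hPfcoeff : ∀ m, m ≤ j+d+2 → Pf.coeff m = esymm (j+d+2) κ (j+d+2 - m) := by
    intro m hm
    rw [hPfdef, Finset.prod_X_add_C_coeff univ κ
      (by rw [card_univ, Fintype.card_fin]; exact hm), card_univ, Fintype.card_fin]
    rfl
  have hPfcoeff0 : ∀ m, j+d+2 < m → Pf.coeff m = 0 := fun m hm =>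
    coeff_eq_zero_of_natDegree_lt (by rw [hPfnd]; exact hm)
  -- derived polynomials
  set f : ℝ[X] := derivative^[d] P with hfdef
  set g : ℝ[X] := derivative^[d+1] P with hgdef
  set F : ℝ[X] := derivative^[d+1] Pf with hFdef
  have hfg : derivative f = g := by
    rw [hfdef, hgdef, ← Function.iterate_succ_apply' derivative d P]
  -- coefficient formulas
  have hfc : ∀ m, m ≤ j+1 →
      f.coeff m = ((m+d).descFactorial d : ℝ) * esymmDel (j+d+2) κ i (j+1-m) := by
    intro m hm
    rw [hfdef, coeff_iterate_derivative, hPcoeff (m+d) (by omega), nsmul_eq_mul]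
    congr 2
    omega
  have hgc : ∀ m, m ≤ j →
      g.coeff m = ((m+(d+1)).descFactorial (d+1) : ℝ) * esymmDel (j+d+2) κ i (j-m) := by
    intro m hm
    rw [hgdef, coeff_iterate_derivative, hPcoeff (m+(d+1)) (by omega), nsmul_eq_mul]
    congr 2
    omega
  have hgc0 : ∀ m, j < m → g.coeff m = 0 := by
    intro m hm
    rw [hgdef, coeff_iterate_derivative, hPcoeff0 (m+(d+1)) (by omega), smul_zero]
  have hFc : ∀ m, m ≤ j+1 →
      F.coeff m = ((m+(d+1)).descFactorial (d+1) : ℝ) * esymm (j+d+2) κ (j+1-m) := by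
    intro m hm
    rw [hFdef, coeff_iterate_derivative, hPfcoeff (m+(d+1)) (by omega), nsmul_eq_mul]
    congr 2
    omega
  have hFc0 : ∀ m, j+1 < m → F.coeff m = 0 := by
    intro m hm
    rw [hFdef, coeff_iterate_derivative, hPfcoeff0 (m+(d+1)) (by omega), smul_zero]
  -- F is positive on [0, ∞)
  have hFpos : ∀ s : ℝ, 0 ≤ s → 0 < F.eval s := by
    intro s hs
    refine eval_pos_of_coeff_nonneg F ?_ ?_ hs
    · rw [hFc 0 (by omega)]
      have h1 : (0:ℝ) < ((0+(d+1)).descFactorial (d+1) : ℝ) :=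
        descFactorial_cast_pos (by omega)
      have h2 : 0 < esymm (j+d+2) κ (j+1-0) := hfull _ (by omega)
      exact mul_pos h1 h2
    · intro m
      rcases le_or_gt m (j+1) with hm | hm
      · rw [hFc m hm]
        have h1 : (0:ℝ) < ((m+(d+1)).descFactorial (d+1) : ℝ) :=
          descFactorial_cast_pos (by omega)
        have h2 : 0 < esymm (j+d+2) κ (j+1-m) := hfull _ (by omega)
        exact le_of_lt (mul_pos h1 h2)
      · rw [hFc0 m hm]
  -- Leibniz: F = (X + C k_i) * g + (d+1) * f
  have hFf : F = (X + C (κ i)) * g + C ((d:ℝ)+1) * f := by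
    rw [hFdef, hPfP, iterate_derivative_linear_mul, ← hgdef, ← hfdef]
  -- g is strictly monotone on [0, ∞)
  have hg'pos : ∀ x : ℝ, 0 ≤ x → 0 < (derivative g).eval x := by
    intro x hx
    have hgg' : derivative g = derivative^[d+2] P := by
      rw [hgdef, ← Function.iterate_succ_apply' derivative (d+1) P]
    refine eval_pos_of_coeff_nonneg _ ?_ ?_ hx
    · rw [hgg', coeff_iterate_derivative, hPcoeff (0+(d+2)) (by omega), nsmul_eq_mul]
      have h1 : (0:ℝ) < ((0+(d+2)).descFactorial (d+2) : ℝ) :=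
        descFactorial_cast_pos (by omega)
      have h2 : 0 < esymmDel (j+d+2) κ i (j+d+1-(0+(d+2))) := by
        have heq : j + d + 1 - (0+(d+2)) = j - 1 := by omega
        rw [heq]
        exact hdel (j-1) (by omega)
      exact mul_pos h1 h2
    · intro m
      rw [hgg', coeff_iterate_derivative]
      rcases le_or_gt (m+(d+2)) (j+d+1) with hm | hm
      · rw [hPcoeff _ hm, nsmul_eq_mul]
        have h1 : (0:ℝ) < (((m+(d+2))).descFactorial (d+2) : ℝ) :=
          descFactorial_cast_pos (by omega)
        have h2 : 0 < esymmDel (j+d+2) κ i (j+d+1-(m+(d+2))) := hdel _ (by omega)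
        exact le_of_lt (mul_pos h1 h2)
      · rw [hPcoeff0 _ hm, smul_zero]
  have hgmono : StrictMonoOn (fun x => g.eval x) (Set.Ici 0) := by
    refine strictMonoOn_of_deriv_pos (convex_Ici 0) ?_ ?_
    · exact (Polynomial.continuous g).continuousOn
    · intro x hx
      rw [interior_Ici] at hx
      rw [Polynomial.deriv]
      exact hg'pos x (le_of_lt hx)
  -- g at 0 is ≤ 0
  have hg0le : g.eval 0 ≤ 0 := by
    rw [← coeff_zero_eq_eval_zero, hgc 0 (by omega)]
    have h1 : (0:ℝ) ≤ ((0+(d+1)).descFactorial (d+1) : ℝ) :=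
      le_of_lt (descFactorial_cast_pos (by omega))
    have h2 : esymmDel (j+d+2) κ i (j-0) ≤ 0 := by simpa using hX
    nlinarith
  -- natDegree and leading coeff of g
  have hgcoeffj : g.coeff j = ((j+(d+1)).descFactorial (d+1) : ℝ) := by
    rw [hgc j le_rfl, Nat.sub_self, esymmDel_zero_eq, mul_one]
  have hgne : g ≠ 0 := by
    intro h0
    rw [h0, coeff_zero] at hgcoeffj
    exact absurd hgcoeffj.symm (ne_of_gt (descFactorial_cast_pos (by omega)))
  have hgnd : g.natDegree = j := by
    refine le_antisymm (natDegree_le_iff_coeff_eq_zero.2 hgc0) (le_natDegree_of_ne_zero ?_)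
    rw [hgcoeffj]
    exact ne_of_gt (descFactorial_cast_pos (by omega))
  have hglead : 0 < g.leadingCoeff := by
    rw [Polynomial.leadingCoeff, hgnd, hgcoeffj]
    exact descFactorial_cast_pos (by omega)
  have hgdeg : 0 < g.degree := natDegree_pos_iff_degree_pos.1 (by omega)
  -- find b >= 0 with g.eval b >= 1
  obtain ⟨b, hb1, hb0⟩ :=
    (((Polynomial.tendsto_atTop_of_leadingCoeff_nonneg g hgdeg hglead.le).eventually_ge_atTop
      1).and (Filter.eventually_ge_atTop (0:ℝ))).exists
  -- IVT
  have hmem : (0:ℝ) ∈ Set.Icc (g.eval 0) (g.eval b) := ⟨hg0le, by linarith⟩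
  obtain ⟨t₀, ht₀mem, hgt₀⟩ :=
    intermediate_value_Icc hb0 ((Polynomial.continuous g).continuousOn) hmem
  have ht₀0 : 0 ≤ t₀ := ht₀mem.1
  have hgt₀' : g.eval t₀ = 0 := hgt₀
  -- f is positive at t₀
  have hft₀ : 0 < f.eval t₀ := by
    have h1 := hFpos t₀ ht₀0
    rw [hFf] at h1
    simp only [eval_add, eval_mul, eval_C, eval_X] at h1
    rw [hgt₀', mul_zero, zero_add] at h1
    nlinarith [h1, show (0:ℝ) < (d:ℝ)+1 by positivity]
  -- f attains its min on [0,∞) at t₀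
  have hfmin : ∀ s : ℝ, 0 ≤ s → f.eval t₀ ≤ f.eval s := by
    intro s hs
    rcases le_total s t₀ with h | h
    · have hanti : AntitoneOn (fun x => f.eval x) (Set.Icc 0 t₀) := by
        refine antitoneOn_of_deriv_nonpos (convex_Icc 0 t₀)
          ((Polynomial.continuous f).continuousOn)
          ((Polynomial.differentiable f).differentiableOn) ?_
        intro x hx
        rw [interior_Icc] at hx
        rw [Polynomial.deriv, hfg]
        have hlt' : eval x g < eval t₀ g :=
          hgmono (Set.mem_Ici.2 (le_of_lt hx.1)) (Set.mem_Ici.2 ht₀0) hx.2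
        rw [hgt₀'] at hlt'
        linarith
      exact hanti ⟨hs, h⟩ ⟨ht₀0, le_rfl⟩ h
    · have hmono : MonotoneOn (fun x => f.eval x) (Set.Ici t₀) := by
        refine monotoneOn_of_deriv_nonneg (convex_Ici t₀)
          ((Polynomial.continuous f).continuousOn)
          ((Polynomial.differentiable f).differentiableOn) ?_
        intro x hx
        rw [interior_Ici] at hx
        rw [Polynomial.deriv, hfg]
        have hlt' : eval t₀ g < eval x g :=
          hgmono (Set.mem_Ici.2 ht₀0) (Set.mem_Ici.2 (le_trans ht₀0 (le_of_lt hx))) hx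
        rw [hgt₀'] at hlt'
        linarith
      exact hmono (Set.mem_Ici.2 le_rfl) (Set.mem_Ici.2 h) h
  have hfpos : ∀ s : ℝ, 0 ≤ s → 0 < f.eval s := fun s hs =>
    lt_of_lt_of_le hft₀ (hfmin s hs)
  -- f is real-rooted with all roots negative
  have hfnd : f.natDegree = j+1 := by
    rw [hfdef, iterate_natDegree P hPmon.ne_zero (by rw [hPnd]; omega), hPnd]
    omega
  have hfroots : Multiset.card f.roots = j+1 := by
    rw [hfdef,
      iterate_roots_card P hPmon.ne_zero (by rw [hProots, hPnd]) (by rw [hPnd]; omega), hPnd]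
    omega
  have hfne : f ≠ 0 := by
    intro h0
    rw [h0, roots_zero] at hfroots
    simp at hfroots
  have hrootsneg : ∀ r ∈ f.roots, r < 0 := by
    intro r hr
    by_contra hr0
    push_neg at hr0
    have h1 := hfpos r hr0
    have h2 : f.eval r = 0 := ((mem_roots hfne).1 hr)
    linarith
  have hflead : 0 < f.leadingCoeff := by
    rw [Polynomial.leadingCoeff, hfnd, hfc (j+1) le_rfl, Nat.sub_self, esymmDel_zero_eq, mul_one]
    exact descFactorial_cast_pos (by omega)
  -- Vieta on f : coefficient 1
  have hc1 := Polynomial.coeff_eq_esymm_roots_of_card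
    (show Multiset.card f.roots = f.natDegree by rw [hfroots, hfnd])
    (show 1 ≤ f.natDegree by rw [hfnd]; omega)
  rw [hfnd] at hc1
  have hjj : j + 1 - 1 = j := by omega
  rw [hjj] at hc1
  have hesneg := Multiset.esymm_neg f.roots j
  have hmappos : 0 < (Multiset.map Neg.neg f.roots).esymm j := by
    refine multiset_esymm_pos ?_ ?_
    · intro x hx
      rw [Multiset.mem_map] at hx
      obtain ⟨r, hr, rfl⟩ := hx
      simpa using hrootsneg r hr
    · rw [Multiset.card_map, hfroots]
      omega
  have hsignpos : 0 < (-1:ℝ)^j * f.roots.esymm j := hesneg ▸ hmappos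
  have hcoeff1pos : 0 < f.coeff 1 := by
    rw [hc1, mul_assoc]
    exact mul_pos hflead hsignpos
  have hcoeff1nonpos : f.coeff 1 ≤ 0 := by
    rw [hfc 1 (by omega), hjj]
    have h1 : (0:ℝ) ≤ ((1+d).descFactorial d : ℝ) :=
      le_of_lt (descFactorial_cast_pos (by omega))
    nlinarith
  linarith

lemma esymmDel_pos_of_pos {n : ℕ} (κ : Fin n → ℝ) (i : Fin n) (hκ : ∀ l, 0 < κ l)
    {m : ℕ} (hm : m ≤ n - 1) : 0 < esymmDel n κ i m := by
  unfold esymmDel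
  refine Finset.sum_pos (fun t _ => Finset.prod_pos fun l _ => hκ l) ?_
  refine Finset.powersetCard_nonempty.2 ?_
  rw [card_erase_of_mem (mem_univ i), card_univ, Fintype.card_fin]
  exact hm

lemma all_pos_of_gamma_full {n : ℕ} (κ : Fin n → ℝ)
    (hκ : ∀ m, m ≤ n → 0 < esymm n κ m) : ∀ l, 0 < κ l := by
  intro l
  by_contra hl
  push_neg at hl
  set Pf : ℝ[X] := ∏ a ∈ (univ : Finset (Fin n)), (X + C (κ a)) with hPfdef
  have hPfnd : Pf.natDegree = n := by
    rw [hPfdef, prodLin_natDegree, card_univ, Fintype.card_fin]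
  have hPfcoeff : ∀ m, m ≤ n → Pf.coeff m = esymm n κ (n - m) := by
    intro m hm
    rw [hPfdef, Finset.prod_X_add_C_coeff univ κ
      (by rw [card_univ, Fintype.card_fin]; exact hm), card_univ, Fintype.card_fin]
    rfl
  have hev : Pf.eval (-(κ l)) = 0 := by
    rw [hPfdef, Polynomial.eval_prod]
    refine Finset.prod_eq_zero (mem_univ l) ?_
    simp
  have hpos : 0 < Pf.eval (-(κ l)) := by
    refine eval_pos_of_coeff_nonneg _ ?_ ?_ (by linarith)
    · rw [hPfcoeff 0 (by omega)]
      exact hκ (n - 0) (by omega)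
    · intro m
      rcases le_or_gt m n with hm | hm
      · rw [hPfcoeff m hm]
        exact le_of_lt (hκ (n - m) (by omega))
      · rw [coeff_eq_zero_of_natDegree_lt (by rw [hPfnd]; exact hm)]
  linarith

lemma main_lemma : ∀ (j n : ℕ) (κ : Fin n → ℝ) (i : Fin n), j + 1 ≤ n →
    (∀ m, m ≤ j + 1 → 0 < esymm n κ m) → 0 < esymmDel n κ i j := by
  intro j
  induction j using Nat.strong_induction_on with
  | _ j ih =>
    intro n κ i hjn hfull
    rcases Nat.eq_zero_or_pos j with rfl | hj
    · rw [esymmDel_zero_eq]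
      norm_num
    · rcases eq_or_lt_of_le hjn with heq | hlt
      · have hall : ∀ l, 0 < κ l :=
          all_pos_of_gamma_full κ (fun m hm => hfull m (by omega))
        exact esymmDel_pos_of_pos κ i hall (by omega)
      · obtain ⟨d, rfl⟩ : ∃ d, n = j + d + 2 := ⟨n - (j+2), by omega⟩
        refine key j d hj κ i hfull ?_
        intro m hm
        exact ih m hm _ κ i (by omega) (fun m' hm' => hfull m' (by omega))

/-- On the Gårding cone `Γ_{r+1}⁺`, the Newton tensors `P_0, …, P_r` are positive definite:
if `σ_i(κ) > 0` for `1 ≤ i ≤ r+1` then `σ_j(κ|κ_i) > 0` for every index `i` and `0 ≤ j ≤ r`. -/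
theorem newton_tensor_pos (n r : ℕ) (hn : 1 ≤ n) (hr : r ≤ n - 1) (κ : Fin n → ℝ)
    (hκ : ∀ i, 1 ≤ i → i ≤ r + 1 → 0 < esymm n κ i) :
    ∀ (i : Fin n) (j : ℕ), j ≤ r → 0 < esymmDel n κ i j := by
  intro i j hj
  refine main_lemma j n κ i (by omega) ?_
  intro m hm
  rcases Nat.eq_zero_or_pos m with rfl | hm1
  · rw [esymm_zero_eq]
    norm_num
  · exact hκ m hm1 (by omega)
end

section
/- Let n ≥ 1, let 0 ≤ r ≤ n−1, and let κ ∈ ℝ^n satisfy σ_i(κ) > 0 for all 1 ≤ i ≤ r+1. Write H_j = σ_j(κ)/C(n,j). Then for every real number λ, λ²·(σ_1(κ)σ_{r+1}(κ) − (r+2)σ_{r+2}(κ)) − 2λ·(r+1)·σ_{r+1}(κ)·H_{r+1} + (n−r)·σ_r(κ)·H_{r+1}² ≥ 0, where σ_{r+2}(κ) is understood to be 0 if r+2 > n. -/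
open Finset

namespace NA

open Polynomial

lemma mesymm_zero (s : Multiset ℝ) : s.esymm 0 = 1 := by
  simp [Multiset.esymm, Multiset.powersetCard_zero_left]

lemma mesymm_eq_zero {s : Multiset ℝ} {j : ℕ} (h : Multiset.card s < j) : s.esymm j = 0 := by
  simp [Multiset.esymm, Multiset.powersetCard_eq_empty _ h]

lemma mesymm_cons (a : ℝ) (s : Multiset ℝ) (j : ℕ) :
    (a ::ₘ s).esymm (j + 1) = s.esymm (j + 1) + a * s.esymm j := by
  rw [Multiset.esymm, Multiset.powersetCard_cons, Multiset.map_add, Multiset.sum_add,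
    Multiset.map_map]
  congr 1
  rw [Multiset.esymm, ← Multiset.sum_map_mul_left]
  congr 1
  exact Multiset.map_congr rfl fun t _ => by simp [Multiset.prod_cons]

lemma mesymm_card (s : Multiset ℝ) : s.esymm (Multiset.card s) = s.prod := by
  induction s using Multiset.induction_on with
  | empty => simp [mesymm_zero]
  | cons a s ih =>
      rw [Multiset.card_cons, mesymm_cons, ih, mesymm_eq_zero (Nat.lt_succ_self _),
        Multiset.prod_cons, zero_add]


lemma mesymm_inv (s : Multiset ℝ) (h0 : (0:ℝ) ∉ s) :
    ∀ i ≤ Multiset.card s, (s.map (·⁻¹)).esymm i * s.prod = s.esymm (Multiset.card s - i) := by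
  induction s using Multiset.induction_on with
  | empty =>
      intro i hi
      have : i = 0 := by simpa using hi
      subst this
      simp [mesymm_zero]
  | cons a s ih =>
      intro i hi
      have ha : a ≠ 0 := fun h => h0 (h ▸ Multiset.mem_cons_self a s)
      have h0s : (0:ℝ) ∉ s := fun h => h0 (Multiset.mem_cons_of_mem h)
      rw [Multiset.card_cons] at hi ⊢
      rcases i with _ | i'
      · rw [mesymm_zero, one_mul, Nat.sub_zero, ← Multiset.card_cons a s, mesymm_card]
      · have hi'le : i' ≤ Multiset.card s := Nat.lt_succ_iff.mp hi
        rw [Multiset.map_cons, mesymm_cons, Multiset.prod_cons, add_mul]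
        have hterm2 : a⁻¹ * (s.map (·⁻¹)).esymm i' * (a * s.prod)
            = s.esymm (Multiset.card s - i') := by
          rw [show a⁻¹ * (s.map (·⁻¹)).esymm i' * (a * s.prod)
              = (a⁻¹ * a) * ((s.map (·⁻¹)).esymm i' * s.prod) from by ring,
            inv_mul_cancel₀ ha, one_mul, ih h0s i' hi'le]
        rcases eq_or_lt_of_le hi'le with heq | hlt
        · -- i' = card s : first term vanishes
          have : (s.map (·⁻¹)).esymm (i' + 1) = 0 :=
            mesymm_eq_zero (by rw [Multiset.card_map]; omega)
          rw [this, zero_mul, zero_add, hterm2, heq]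
          simp [mesymm_zero]
        · -- i' < card s
          have hsub : Multiset.card s + 1 - (i' + 1) = (Multiset.card s - i' - 1) + 1 := by omega
          rw [hsub, mesymm_cons]
          have hterm1 : (s.map (·⁻¹)).esymm (i' + 1) * (a * s.prod)
              = a * s.esymm (Multiset.card s - i' - 1) := by
            rw [show (s.map (·⁻¹)).esymm (i' + 1) * (a * s.prod)
                = a * ((s.map (·⁻¹)).esymm (i' + 1) * s.prod) from by ring,
              ih h0s (i' + 1) hlt]
            rfl
          have hterm2' : a⁻¹ * (s.map (·⁻¹)).esymm i' * (a * s.prod)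
              = s.esymm ((Multiset.card s - i' - 1) + 1) := by
            rw [hterm2]; congr 1; omega
          rw [hterm1, hterm2']
          ring

lemma deriv_step (s : Multiset ℝ) (n : ℕ) (hn : 1 ≤ n) (hcard : Multiset.card s = n) :
    ∃ t : Multiset ℝ, Multiset.card t = n - 1 ∧
      ∀ j ≤ n - 1, (n : ℝ) * t.esymm j = ((n : ℝ) - j) * s.esymm j := by
  set p := (s.map fun a => X - C a).prod with hp
  have hmonic : p.Monic := monic_multiset_prod_of_monic _ _ fun a _ => monic_X_sub_C a
  have hdeg : p.natDegree = n := by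
    rw [hp, natDegree_multiset_prod_X_sub_C_eq_card, hcard]
  have hrootsp : p.roots = s := roots_multiset_prod_X_sub_C s
  set q := derivative p with hq
  have hq1 : q.coeff (n - 1) = n := by
    have h1 : q.coeff (n - 1) = p.coeff (n - 1 + 1) * ((n - 1 : ℕ) + 1 : ℝ) := coeff_derivative p (n - 1)
    have h2 : n - 1 + 1 = n := by omega
    rw [h2] at h1
    rw [h1, show p.coeff n = 1 from hdeg ▸ hmonic.coeff_natDegree, one_mul,
      Nat.cast_sub hn]
    push_cast
    ring
  have hnne : ((n : ℝ)) ≠ 0 := by positivity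
  have hq0 : q ≠ 0 := fun h => by rw [h] at hq1; simp at hq1; exact hnne hq1.symm
  have hqdeg : q.natDegree = n - 1 := by
    refine le_antisymm (hdeg ▸ natDegree_derivative_le p) (le_natDegree_of_ne_zero ?_)
    rw [hq1]; exact hnne
  have hqroots : Multiset.card q.roots = n - 1 := by
    refine le_antisymm (hqdeg ▸ q.card_roots') ?_
    have := p.card_roots_le_derivative
    rw [hrootsp, hcard, ← hq] at this
    omega
  have hqlead : q.leadingCoeff = n := by rw [leadingCoeff, hqdeg, hq1]
  refine ⟨q.roots, hqroots, fun j hj => ?_⟩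
  have hvieta : q.coeff (n - 1 - j) =
      q.leadingCoeff * (-1) ^ (q.natDegree - (n - 1 - j)) * q.roots.esymm (q.natDegree - (n - 1 - j)) :=
    coeff_eq_esymm_roots_of_card (hqdeg ▸ hqroots) (by omega)
  rw [hqdeg, show n - 1 - (n - 1 - j) = j from by omega, hqlead] at hvieta
  have hd : q.coeff (n - 1 - j) = p.coeff (n - 1 - j + 1) * ((n - 1 - j : ℕ) + 1 : ℝ) :=
    coeff_derivative p (n - 1 - j)
  have hidx : n - 1 - j + 1 = n - j := by omega
  have hpv : p.coeff (n - j) = (-1) ^ j * s.esymm j := by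
    have := Multiset.prod_X_sub_C_coeff s (k := n - j)
      (by rw [hcard]; omega : n - j ≤ Multiset.card s)
    rw [hcard, show n - (n - j) = j from by omega] at this
    exact this
  rw [hidx, hpv] at hd
  rw [hd] at hvieta
  -- hvieta : (-1)^j * esymm s j * (cast (n-1-j) + 1) = n * (-1)^j * esymm t j
  have hc : ((n - 1 - j : ℕ) : ℝ) + 1 = (n : ℝ) - j := by
    have : (n - 1 - j : ℕ) = n - (j + 1) := by omega
    rw [this]
    push_cast [Nat.cast_sub (show j + 1 ≤ n from by omega)]
    ring
  rw [hc] at hvieta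
  rcases Nat.even_or_odd j with hpar | hpar
  · rw [hpar.neg_one_pow] at hvieta
    linear_combination -hvieta
  · rw [hpar.neg_one_pow] at hvieta
    linear_combination hvieta

set_option maxHeartbeats 1000000 in
theorem newton : ∀ (n j : ℕ) (s : Multiset ℝ), Multiset.card s = n → j + 2 ≤ n →
    ((j:ℝ)+2) * ((n:ℝ) - j) * (s.esymm j * s.esymm (j+2)) ≤
    ((j:ℝ)+1) * ((n:ℝ) - (j+1)) * s.esymm (j+1)^2 := by
  intro n
  induction n using Nat.strong_induction_on with
  | _ n IH =>
  have stepA : ∀ (j : ℕ) (s : Multiset ℝ), Multiset.card s = n → j + 3 ≤ n →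
      ((j:ℝ)+2) * ((n:ℝ) - j) * (s.esymm j * s.esymm (j+2)) ≤
      ((j:ℝ)+1) * ((n:ℝ) - (j+1)) * s.esymm (j+1)^2 := by
    intro j s hc hj
    obtain ⟨t, ht, hrel⟩ := deriv_step s n (by omega) hc
    have IH' := IH (n-1) (by omega) j t ht (by omega)
    have hcast : ((n-1 : ℕ):ℝ) = (n:ℝ) - 1 := by
      push_cast [Nat.cast_sub (show 1 ≤ n by omega)]; ring
    rw [hcast] at IH'
    have h0 := hrel j (by omega)
    have h1 := hrel (j+1) (by omega)
    have h2 := hrel (j+2) (by omega)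
    set A := s.esymm j with hA
    set B := s.esymm (j+1) with hB
    set Cc := s.esymm (j+2) with hCc
    set A' := t.esymm j with hA'
    set B' := t.esymm (j+1) with hB'
    set C' := t.esymm (j+2) with hC'
    push_cast at h0 h1 h2 IH'
    have h02 : ((n:ℝ) - j) * ((n:ℝ) - j - 2) * (A * Cc) = (n:ℝ)^2 * (A' * C') := by
      linear_combination (-(((n:ℝ) - j - 2) * Cc)) * h0 + (-((n:ℝ) * A')) * h2
    have h11 : ((n:ℝ) - j - 1)^2 * B^2 = (n:ℝ)^2 * B'^2 := by
      linear_combination (-(((n:ℝ) - j - 1) * B + (n:ℝ) * B')) * h1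
    have hP0 := mul_le_mul_of_nonneg_left IH' (sq_nonneg (n:ℝ))
    have hP : ((j:ℝ)+2) * ((n:ℝ)-1-j) * (((n:ℝ) - j) * ((n:ℝ) - j - 2) * (A * Cc))
        ≤ ((j:ℝ)+1) * ((n:ℝ)-1-(j+1)) * (((n:ℝ) - j - 1)^2 * B^2) := by
      rw [h02, h11]; linarith [hP0]
    have hjc : (j:ℝ) + 3 ≤ (n:ℝ) := by exact_mod_cast hj
    have hpos : (0:ℝ) < ((n:ℝ) - (j+1)) * ((n:ℝ) - (j+2)) := by nlinarith
    refine le_of_mul_le_mul_right ?_ hpos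
    nlinarith [hP]
  intro j s hc hj
  rcases lt_or_ge (j+2) n with hlt | hge
  · exact stepA j s hc (by omega)
  · have hjn : j + 2 = n := le_antisymm hj hge
    rcases Nat.lt_or_ge n 3 with hn2 | hn3
    · -- n = 2, j = 0
      have hn : n = 2 := by omega
      have hj0 : j = 0 := by omega
      subst hn hj0
      obtain ⟨x, y, rfl⟩ := Multiset.card_eq_two.mp hc
      have hxy : ({x, y} : Multiset ℝ) = x ::ₘ y ::ₘ 0 := rfl
      have e1y : (y ::ₘ (0 : Multiset ℝ)).esymm 1 = y := by
        have h : (y ::ₘ (0 : Multiset ℝ)).esymm 1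
            = (0 : Multiset ℝ).esymm 1 + y * (0 : Multiset ℝ).esymm 0 := mesymm_cons y 0 0
        rwa [mesymm_eq_zero (by simp : Multiset.card (0 : Multiset ℝ) < 1), mesymm_zero,
          zero_add, mul_one] at h
      have e1 : ({x, y} : Multiset ℝ).esymm 1 = x + y := by
        have h : (x ::ₘ y ::ₘ (0 : Multiset ℝ)).esymm 1
            = (y ::ₘ (0:Multiset ℝ)).esymm 1 + x * (y ::ₘ (0:Multiset ℝ)).esymm 0 :=
          mesymm_cons x (y ::ₘ 0) 0
        rw [e1y, mesymm_zero, mul_one] at h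
        rw [hxy, h]; ring
      have e2 : ({x, y} : Multiset ℝ).esymm 2 = x * y := by
        have h : (x ::ₘ y ::ₘ (0 : Multiset ℝ)).esymm 2
            = (y ::ₘ (0:Multiset ℝ)).esymm 2 + x * (y ::ₘ (0:Multiset ℝ)).esymm 1 :=
          mesymm_cons x (y ::ₘ 0) 1
        rw [e1y, mesymm_eq_zero (show Multiset.card (y ::ₘ (0:Multiset ℝ)) < 2 by simp)] at h
        rw [hxy, h]; ring
      rw [e1, e2, mesymm_zero]
      norm_num
      nlinarith [sq_nonneg (x - y)]
    · by_cases h0 : (0:ℝ) ∈ s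
      · have hesn : s.esymm (j+2) = s.prod := by rw [hjn, ← hc]; exact mesymm_card s
        rw [hesn, Multiset.prod_eq_zero h0, mul_zero, mul_zero]
        have hjc : (j:ℝ) + 2 = (n:ℝ) := by exact_mod_cast hjn
        rw [← hjc]
        nlinarith [sq_nonneg (s.esymm (j+1)),
          mul_nonneg (Nat.cast_nonneg (α := ℝ) j) (sq_nonneg (s.esymm (j+1)))]
      · set t := s.map (·⁻¹) with htdef
        have htc : Multiset.card t = n := by rw [htdef, Multiset.card_map, hc]
        have hNT0 := stepA 0 t htc (by omega)
        have h1 := mesymm_inv s h0 1 (by omega)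
        have h2 := mesymm_inv s h0 2 (by omega)
        rw [← htdef] at h1 h2
        have h00 := mesymm_zero t
        have hprodne : s.prod ≠ 0 := Multiset.prod_ne_zero h0
        have hp2 : (0:ℝ) ≤ s.prod^2 := sq_nonneg _
        have key := mul_le_mul_of_nonneg_right hNT0 hp2
        rw [h00] at key
        have eqj : s.esymm j = t.esymm 2 * s.prod := by
          rw [show j = Multiset.card s - 2 from by omega]; exact h2.symm
        have eqj1 : s.esymm (j+1) = t.esymm 1 * s.prod := by
          rw [show j + 1 = Multiset.card s - 1 from by omega]; exact h1.symm
        have eqj2 : s.esymm (j+2) = s.prod := by rw [hjn, ← hc]; exact mesymm_card s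
        have hjc : (j:ℝ) = (n:ℝ) - 2 := by
          have : ((j:ℝ)) + 2 = n := by exact_mod_cast hjn
          linarith
        rw [eqj, eqj1, eqj2, hjc]
        push_cast at key
        linarith [key]

end NA

open NA in
set_option maxHeartbeats 1000000 in
/-- If `σ_i(κ) > 0` for `1 ≤ i ≤ r+1`, then for every `λ ∈ ℝ`,
`λ²(σ_1σ_{r+1} - (r+2)σ_{r+2}) - 2λ(r+1)σ_{r+1}H_{r+1} + (n-r)σ_r H_{r+1}² ≥ 0`. -/
theorem quadratic_nonneg (n r : ℕ) (hn : 1 ≤ n) (hr : r ≤ n - 1) (κ : Fin n → ℝ)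
    (hκ : ∀ i, 1 ≤ i → i ≤ r + 1 → 0 < esymm n κ i) (lam : ℝ) :
    lam ^ 2 * (esymm n κ 1 * esymm n κ (r + 1) - ((r : ℝ) + 2) * esymm n κ (r + 2))
      - 2 * lam * ((r : ℝ) + 1) * esymm n κ (r + 1) * Hmc n κ (r + 1)
      + ((n : ℝ) - r) * esymm n κ r * (Hmc n κ (r + 1)) ^ 2 ≥ 0 := by
  have hrn : r + 1 ≤ n := by omega
  have hcardS : Multiset.card (Finset.univ.val.map κ) = n := by simp
  have heS : ∀ i, esymm n κ i = (Finset.univ.val.map κ).esymm i := fun i =>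
    (Finset.esymm_map_val κ Finset.univ i).symm
  have NT : ∀ j, j + 2 ≤ n → ((j:ℝ)+2) * ((n:ℝ) - j) * (esymm n κ j * esymm n κ (j+2)) ≤
      ((j:ℝ)+1) * ((n:ℝ) - (j+1)) * esymm n κ (j+1)^2 := by
    intro j hj
    rw [heS j, heS (j+2), heS (j+1)]
    exact newton n j _ hcardS hj
  have he0 : esymm n κ 0 = 1 := by simp [esymm]
  have hepos : ∀ i, i ≤ r + 1 → 0 < esymm n κ i := by
    intro i hi
    rcases Nat.eq_zero_or_pos i with rfl | hpos
    · rw [he0]; norm_num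
    · exact hκ i hpos hi
  set c : ℕ → ℝ := fun i => (n.choose i : ℝ) with hcdef
  have hcpos : ∀ i, i ≤ n → 0 < c i := fun i hi => by
    have := Nat.choose_pos hi; simp only [hcdef]; exact_mod_cast this
  have hc0 : c 0 = 1 := by simp [hcdef]
  have hc1 : c 1 = n := by simp [hcdef]
  have hb : ∀ k, k + 1 ≤ n → c (k+1) * ((k:ℝ)+1) = c k * ((n:ℝ) - k) := by
    intro k hk
    have hnat := Nat.choose_succ_right_eq n k
    have hcast : ((n.choose (k+1) * (k+1) : ℕ) : ℝ) = ((n.choose k * (n - k) : ℕ) : ℝ) := by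
      exact_mod_cast congrArg Nat.cast hnat
    push_cast [Nat.cast_sub (show k ≤ n by omega)] at hcast
    simpa [hcdef] using hcast
  set hf : ℕ → ℝ := fun i => esymm n κ i / c i with hhdef
  have hhpos : ∀ i, i ≤ r + 1 → 0 < hf i := fun i hi =>
    div_pos (hepos i hi) (hcpos i (le_trans hi hrn))
  have hN : ∀ j, j + 2 ≤ n → hf j * hf (j+2) ≤ hf (j+1)^2 := by
    intro j hj
    have nt := NT j hj
    have b1 := hb (j+1) hj
    have b2 := hb j (by omega)
    push_cast at b1 b2
    have hcj := hcpos j (by omega)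
    have hcj1 := hcpos (j+1) (by omega)
    have hcj2 := hcpos (j+2) hj
    show esymm n κ j / c j * (esymm n κ (j+2) / c (j+2)) ≤ (esymm n κ (j+1) / c (j+1))^2
    rw [div_mul_div_comm, div_pow, div_le_div_iff₀ (by positivity) (by positivity)]
    refine le_of_mul_le_mul_right ?_ (show (0:ℝ) < ((j:ℝ)+1)*((j:ℝ)+2) by positivity)
    have X : esymm n κ j * esymm n κ (j+2) * c (j+1)^2 * (((j:ℝ)+1)*((j:ℝ)+2))
        = (((j:ℝ)+2) * ((n:ℝ) - j) * (esymm n κ j * esymm n κ (j+2))) * (c j * c (j+1)) := by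
      linear_combination (esymm n κ j * esymm n κ (j+2) * c (j+1) * ((j:ℝ)+2)) * b2
    have Y : esymm n κ (j+1)^2 * (c j * c (j+2)) * (((j:ℝ)+1)*((j:ℝ)+2))
        = (((j:ℝ)+1) * ((n:ℝ) - ((j:ℝ)+1)) * esymm n κ (j+1)^2) * (c j * c (j+1)) := by
      linear_combination (esymm n κ (j+1)^2 * c j * ((j:ℝ)+1)) * b1
    rw [X, Y]
    exact mul_le_mul_of_nonneg_right nt (le_of_lt (mul_pos hcj hcj1))
  have chain : ∀ m, m ≤ r → hf (m+1) ≤ hf 1 * hf m := by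
    intro m
    induction m with
    | zero =>
        intro _
        have h0 : hf 0 = 1 := by simp [hhdef, he0, hc0]
        rw [h0, mul_one]
    | succ k ih =>
        intro hk
        have ihk := ih (by omega)
        have hnk := hN k (by omega)
        have p0 := hhpos k (by omega)
        have p1 := hhpos (k+1) (by omega)
        nlinarith [hnk, mul_le_mul_of_nonneg_right ihk (le_of_lt p1), p0]
  have key1 : ((r:ℝ)+1) * (n:ℝ) * esymm n κ (r+1) ≤ ((n:ℝ) - r) * (esymm n κ 1 * esymm n κ r) := by
    have hch := chain r le_rfl
    have hcr := hcpos r (by omega)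
    have hcr1 := hcpos (r+1) hrn
    have hn0 : (0:ℝ) < (n:ℝ) := by exact_mod_cast hn
    rw [show hf (r+1) = esymm n κ (r+1) / c (r+1) from rfl,
      show hf 1 = esymm n κ 1 / c 1 from rfl, show hf r = esymm n κ r / c r from rfl,
      div_mul_div_comm, div_le_div_iff₀ hcr1 (by rw [hc1]; positivity)] at hch
    -- hch : e (r+1) * (c 1 * c r) ≤ e 1 * e r * c (r+1)
    have b := hb r hrn
    push_cast at b
    refine le_of_mul_le_mul_right ?_ hcr
    have X : ((r:ℝ)+1) * (n:ℝ) * esymm n κ (r+1) * c r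
        = (esymm n κ (r+1) * (c 1 * c r)) * ((r:ℝ)+1) := by
      rw [hc1]; ring
    have Y : ((n:ℝ) - r) * (esymm n κ 1 * esymm n κ r) * c r
        = (esymm n κ 1 * esymm n κ r * c (r+1)) * ((r:ℝ)+1) := by
      linear_combination (-(esymm n κ 1 * esymm n κ r)) * b
    rw [X, Y]
    exact mul_le_mul_of_nonneg_right hch (by positivity)
  have claim1 : ((r:ℝ)+1)^2 * esymm n κ (r+1)^2 ≤
      ((n:ℝ) - r) * esymm n κ r *
        (esymm n κ 1 * esymm n κ (r+1) - ((r:ℝ)+2) * esymm n κ (r+2)) := by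
    have k1e := mul_le_mul_of_nonneg_right key1 (le_of_lt (hepos (r+1) le_rfl))
    rcases eq_or_lt_of_le hrn with heq | hlt
    · have hE2 : esymm n κ (r+2) = 0 := by
        rw [heS]; exact mesymm_eq_zero (by omega)
      have hnr : (n:ℝ) = (r:ℝ)+1 := by exact_mod_cast heq.symm
      rw [hE2, hnr]
      rw [hnr] at k1e
      nlinarith [k1e]
    · have nt := NT r (by omega)
      push_cast at nt
      linarith [k1e, nt]
  have hnrpos : (0:ℝ) < (n:ℝ) - r := by
    have : (r:ℝ) + 1 ≤ (n:ℝ) := by exact_mod_cast hrn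
    linarith
  have hX : 0 < esymm n κ 1 * esymm n κ (r+1) - ((r:ℝ)+2) * esymm n κ (r+2) := by
    nlinarith [claim1, mul_pos hnrpos (hepos r (by omega)),
      mul_pos (mul_pos (show (0:ℝ) < ((r:ℝ)+1)^2 by positivity) (hepos (r+1) le_rfl)) (hepos (r+1) le_rfl)]
  have hb2ac := mul_le_mul_of_nonneg_right claim1 (sq_nonneg (Hmc n κ (r+1)))
  nlinarith [hb2ac, hX,
    sq_nonneg ((esymm n κ 1 * esymm n κ (r+1) - ((r:ℝ)+2) * esymm n κ (r+2)) * lam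
      - ((r:ℝ)+1) * esymm n κ (r+1) * Hmc n κ (r+1))]
end
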